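/- arXiv:2604.20284 — 6 statements merged into one kernel-verified Lean document; each statement's English description precedes it below -/
import Mathlib

section
/- Let H_1, …, H_R be Hermitian d×d complex matrices, let H := Σ_{r=1}^R H_r, and for τ ≥ 0 let U₁(τ) := exp(−i H_R τ) · exp(−i H_{R−1} τ) ⋯ exp(−i H_1 τ). Then ‖U₁(τ) − exp(−i H τ)‖ ≤ (τ²/2) · Σ_{r₁=1}^{R} ‖[ Σ_{r₂=r₁+1}^{R} H_{r₂}, H_{r₁} ]‖, where [A,B] := AB − BA. -/
/-!
For skew-adjoint `a`, `b` in a C⋆-algebra, `s ↦ e^{(1-s)(a+b)} e^{sb} e^{sa}` runs from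
`e^{a+b}` to `e^b e^a` with derivative `e^{(1-s)(a+b)} ⁅e^{sb}, a⁆ e^{sa}`. All exponentials are
unitary, and `⁅e^{sb}, a⁆ = (e^{sb} a e^{-sb} - a) e^{sb}` where the conjugate moves at speed
`‖⁅b, a⁆‖`, so the derivative has norm at most `s ‖⁅b, a⁆‖`; integrating over `[0, 1]` gives
`‖e^b e^a - e^{a+b}‖ ≤ ‖⁅b, a⁆‖ / 2`. For `R` factors, peel off the rightmost exponential and
split the sum as `X₀ + (X₁ + ⋯)`: multiplying by a unitary does not change norms, so the
errors add up. With `X r = -iτ H r` every commutator picks up the factor `τ²`.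
-/

open Matrix NormedSpace Set
open scoped Matrix.Norms.L2Operator

lemma List.prod_map_reverse_finRange_succ {M : Type*} [Monoid M] {n : ℕ}
    (f : Fin (n + 1) → M) :
    ((finRange (n + 1)).reverse.map f).prod =
      ((finRange n).reverse.map fun i => f i.succ).prod * f 0 := by
  simp [finRange_succ, map_reverse, Function.comp_def]

section CStarAlgebra

variable {A : Type*} [CStarAlgebra A]

lemma exp_mem_unitary {a : A} (ha : a ∈ skewAdjoint A) : exp a ∈ unitary A :=
  -- `CStarAlgebra` carries no `ℚ`-algebra structure, which Mathlib's `exp` lemmas ask for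
  letI : NormedAlgebra ℚ A := .restrictScalars ℚ ℂ A
  exp_mem_unitary_of_mem_skewAdjoint ha

lemma norm_lie_exp_smul_le {b : A} (hb : b ∈ skewAdjoint A) (a : A) (s : ℝ) :
    ‖⁅exp (s • b), a⁆‖ ≤ ‖⁅b, a⁆‖ * |s| := by
  let _ : NormedAlgebra ℚ A := .restrictScalars ℚ ℂ A
  let conj : ℝ → A := fun u => exp (u • b) * a * exp (u • -b)
  have hderiv : ∀ u, HasDerivAt conj (exp (u • b) * ⁅b, a⁆ * exp (u • -b)) u := by
    intro u
    have hcomm : Commute b (exp (u • b)) := ((Commute.refl b).smul_right u).exp_right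
    have hcomm' : Commute (-b) (exp (u • -b)) := ((Commute.refl _).smul_right u).exp_right
    refine (((hasDerivAt_exp_smul_const' b u).mul_const a).mul
      (hasDerivAt_exp_smul_const (-b) u)).congr_deriv ?_
    rw [Ring.lie_def, hcomm.eq, ← hcomm'.eq]
    noncomm_ring
  have hbound : ∀ u : ℝ, ‖exp (u • b) * ⁅b, a⁆ * exp (u • -b)‖ ≤ ‖⁅b, a⁆‖ := fun u => by
    rw [CStarRing.norm_mul_mem_unitary _
        (exp_mem_unitary (skewAdjoint.smul_mem u (neg_mem hb))),
      CStarRing.norm_mem_unitary_mul _ (exp_mem_unitary (skewAdjoint.smul_mem u hb))]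
  have hinv : exp (s • -b) * exp (s • b) = 1 := by
    rw [smul_neg, ← NormedSpace.exp_add_of_commute (Commute.refl _).neg_left, neg_add_cancel,
      exp_zero]
  have hlie : ⁅exp (s • b), a⁆ = (conj s - conj 0) * exp (s • b) := by
    simp only [conj, Ring.lie_def, zero_smul, exp_zero, mul_one, one_mul, sub_mul, mul_assoc,
      hinv]
  calc ‖⁅exp (s • b), a⁆‖ = ‖conj s - conj 0‖ := by
        rw [hlie, CStarRing.norm_mul_mem_unitary _ (exp_mem_unitary (skewAdjoint.smul_mem s hb))]
    _ ≤ ‖⁅b, a⁆‖ * ‖s - 0‖ := convex_univ.norm_image_sub_le_of_norm_hasDerivWithin_le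
        (fun u _ => (hderiv u).hasDerivWithinAt) (fun u _ => hbound u) (mem_univ 0) (mem_univ s)
    _ = ‖⁅b, a⁆‖ * |s| := by rw [sub_zero, Real.norm_eq_abs]

lemma norm_exp_mul_exp_sub_exp_add_le {a b : A} (ha : a ∈ skewAdjoint A)
    (hb : b ∈ skewAdjoint A) : ‖exp b * exp a - exp (a + b)‖ ≤ ‖⁅b, a⁆‖ / 2 := by
  let f : ℝ → A := fun s => exp ((1 - s) • (a + b)) * (exp (s • b) * exp (s • a))
  let f' : ℝ → A := fun s => exp ((1 - s) • (a + b)) * (⁅exp (s • b), a⁆ * exp (s • a))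
  have hderiv : ∀ s, HasDerivAt f (f' s) s := by
    intro s
    have hfirst : HasDerivAt (fun s : ℝ => exp ((1 - s) • (a + b)))
        (-(exp ((1 - s) • (a + b)) * (a + b))) s :=
      ((hasDerivAt_exp_smul_const (a + b) (1 - s)).scomp s
        ((hasDerivAt_id s).const_sub 1)).congr_deriv (neg_one_smul ℝ _)
    refine (hfirst.mul ((hasDerivAt_exp_smul_const' b s).mul
      (hasDerivAt_exp_smul_const' a s))).congr_deriv ?_
    simp only [f', Pi.mul_apply, Ring.lie_def]
    noncomm_ring
  have hbound : ∀ s ∈ Ico (0 : ℝ) 1, ‖f' s‖ ≤ ‖⁅b, a⁆‖ * s := by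
    intro s hs
    rw [CStarRing.norm_mem_unitary_mul _
        (exp_mem_unitary (skewAdjoint.smul_mem _ (add_mem ha hb))),
      CStarRing.norm_mul_mem_unitary _ (exp_mem_unitary (skewAdjoint.smul_mem s ha))]
    exact (norm_lie_exp_smul_le hb a s).trans_eq (by rw [abs_of_nonneg hs.1])
  have hquadratic : ∀ s, HasDerivAt (fun s : ℝ => ‖⁅b, a⁆‖ * s ^ 2 / 2) (‖⁅b, a⁆‖ * s) s := by
    intro s
    refine (((hasDerivAt_pow 2 s).const_mul _).div_const 2).congr_deriv ?_
    ring
  have := image_norm_le_of_norm_deriv_right_le_deriv_boundary (f := fun s => f s - f 0)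
    (fun s _ => ((hderiv s).sub_const _).continuousAt.continuousWithinAt)
    (fun s _ => ((hderiv s).sub_const _).hasDerivWithinAt) (by simp) hquadratic hbound
    (right_mem_Icc.2 zero_le_one)
  simpa [f] using this

theorem norm_prod_exp_sub_exp_sum_le {R : ℕ} (X : Fin R → A) (hX : ∀ r, X r ∈ skewAdjoint A) :
    ‖((List.finRange R).reverse.map fun r => exp (X r)).prod - exp (∑ r, X r)‖ ≤
      (∑ r₁, ‖⁅∑ r₂ > r₁, X r₂, X r₁⁆‖) / 2 := by
  induction R with
  | zero => simp
  | succ R ih =>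
    rw [List.prod_map_reverse_finRange_succ, Fin.sum_univ_succ, Fin.sum_univ_succ,
      Fin.sum_Ioi_zero]
    simp only [Fin.sum_Ioi_succ]
    set P := ((List.finRange R).reverse.map fun r : Fin R => exp (X r.succ)).prod
    set B := ∑ r : Fin R, X r.succ
    calc ‖P * exp (X 0) - exp (X 0 + B)‖
        ≤ ‖P * exp (X 0) - exp B * exp (X 0)‖ + ‖exp B * exp (X 0) - exp (X 0 + B)‖ :=
          norm_sub_le_norm_sub_add_norm_sub _ _ _
      _ = ‖P - exp B‖ + ‖exp B * exp (X 0) - exp (X 0 + B)‖ := by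
          rw [← sub_mul, CStarRing.norm_mul_mem_unitary _ (exp_mem_unitary (hX 0))]
      _ ≤ (∑ r₁ : Fin R, ‖⁅∑ r₂ > r₁, X r₂.succ, X r₁.succ⁆‖) / 2 + ‖⁅B, X 0⁆‖ / 2 :=
          add_le_add (ih _ fun r => hX r.succ)
            (norm_exp_mul_exp_sub_exp_add_le (hX 0) (sum_mem fun (r : Fin R) _ => hX r.succ))
      _ = (‖⁅B, X 0⁆‖ + ∑ r₁ : Fin R, ‖⁅∑ r₂ > r₁, X r₂.succ, X r₁.succ⁆‖) / 2 := by ring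

end CStarAlgebra

theorem first_order_trotter_commutator_scaling_general {d R : ℕ}
    (H : Fin R → Matrix (Fin d) (Fin d) ℂ) (hHerm : ∀ r, (H r).IsHermitian)
    (τ : ℝ) :
    ‖(((List.finRange R).reverse.map
          (fun r => NormedSpace.exp ((-(Complex.I * (τ : ℂ))) • H r))).prod
        - NormedSpace.exp ((-(Complex.I * (τ : ℂ))) • ∑ r, H r))‖ ≤
      τ ^ 2 / 2 * ∑ r₁ : Fin R,
        ‖(∑ r₂ ∈ Finset.univ.filter (fun r₂ => r₁ < r₂), H r₂) * H r₁
            - H r₁ * (∑ r₂ ∈ Finset.univ.filter (fun r₂ => r₁ < r₂), H r₂)‖ := by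
  set c : ℂ := -(Complex.I * τ)
  have hc : c ∈ skewAdjoint ℂ := by simp [c, skewAdjoint.mem_iff]
  have hcc : ‖c * c‖ = τ ^ 2 := by simp [c, sq]
  have key := norm_prod_exp_sub_exp_sum_le (fun r => c • H r)
    fun r => (hHerm r).isSelfAdjoint.smul_mem_skewAdjoint hc
  have hlie (x y : Matrix (Fin d) (Fin d) ℂ) : ⁅c • x, c • y⁆ = (c * c) • ⁅x, y⁆ := by
    simp only [Ring.lie_def, smul_mul_smul_comm, smul_sub]
  simp only [← Finset.smul_sum, hlie, norm_smul, hcc, ← Finset.mul_sum] at key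
  simp only [Finset.filter_lt_eq_Ioi, ← Ring.lie_def]
  linarith

/-- **Commutator-scaling bound for the first-order Trotter formula.**
Let `H 1, …, H R` be Hermitian `d × d` complex matrices, `Hsum := ∑ r, H r`, and
`U₁(τ) := exp(−i H_R τ) ⋯ exp(−i H_1 τ)` (the factor with the largest index leftmost).
Then `‖U₁(τ) − exp(−i Hsum τ)‖ ≤ (τ²/2) ∑_{r₁} ‖[∑_{r₂ > r₁} H r₂, H r₁]‖`,
where `‖·‖` is the spectral norm. -/
theorem first_order_trotter_commutator_scaling {d R : ℕ}
    (H : Fin R → Matrix (Fin d) (Fin d) ℂ) (hHerm : ∀ r, (H r).IsHermitian)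
    (τ : ℝ) (hτ : 0 ≤ τ) :
    ‖(((List.finRange R).reverse.map
          (fun r => NormedSpace.exp ((-(Complex.I * (τ : ℂ))) • H r))).prod
        - NormedSpace.exp ((-(Complex.I * (τ : ℂ))) • ∑ r, H r))‖ ≤
      τ ^ 2 / 2 * ∑ r₁ : Fin R,
        ‖(∑ r₂ ∈ Finset.univ.filter (fun r₂ => r₁ < r₂), H r₂) * H r₁
            - H r₁ * (∑ r₂ ∈ Finset.univ.filter (fun r₂ => r₁ < r₂), H r₂)‖ :=
  first_order_trotter_commutator_scaling_general H hHerm τ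
end

section
/- Let H_1, …, H_R be Hermitian d×d complex matrices, let H := Σ_{r=1}^R H_r, and for τ ≥ 0 let U₁(τ) := exp(−i H_R τ) · exp(−i H_{R−1} τ) ⋯ exp(−i H_1 τ). Then ‖U₁(τ) − exp(−i H τ)‖ ≤ (τ²/2) · ( Σ_{r=1}^{R} ‖H_r‖ )². -/
/-!
For skew-adjoint `x, y` in a C⋆-algebra the exponentials `exp (t • x)` are unitary, so
`‖exp (t • x) - 1‖ ≤ t ‖x‖`, and multiplying by them does not change norms. The defect
`F s = exp (s • x) * exp (s • y) * exp (-s • (x + y))` has derivative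
`exp (s • x) * [x, exp (s • y) - 1] * exp (-s • (x + y))`, of norm at most `2 s ‖x‖ ‖y‖`;
integrating gives `‖exp (t • x) * exp (t • y) - exp (t • (x + y))‖ ≤ t² ‖x‖ ‖y‖`.
Peeling off one factor at a time and using `‖∑ xᵢ‖ ≤ ∑ ‖xᵢ‖`, these errors add up to
`t² / 2 (∑ ‖xᵢ‖)²`. The theorem is the case `xᵣ = -i Hᵣ` in the matrix algebra.
-/

open NormedSpace

theorem norm_commutator_le {R : Type*} [NonUnitalNormedRing R] (a b : R) :
    ‖a * b - b * a‖ ≤ 2 * ‖a‖ * ‖b‖ :=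
  calc ‖a * b - b * a‖ ≤ ‖a‖ * ‖b‖ + ‖b‖ * ‖a‖ :=
        (norm_sub_le _ _).trans (add_le_add (norm_mul_le _ _) (norm_mul_le _ _))
    _ = 2 * ‖a‖ * ‖b‖ := by ring

section

variable {A : Type*} [NormedRing A] [NormedAlgebra ℝ A] [CompleteSpace A]

noncomputable def trotterDefect (x y : A) (s : ℝ) : A :=
  exp (s • x) * exp (s • y) * exp (s • -(x + y))

theorem hasDerivAt_trotterDefect (x y : A) (s : ℝ) :
    HasDerivAt (trotterDefect x y)
      (exp (s • x) * (x * (exp (s • y) - 1) - (exp (s • y) - 1) * x) * exp (s • -(x + y))) s := by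
  -- the algebraic lemmas about `exp` are stated for `ℚ`-algebras
  let +nondep : NormedAlgebra ℚ A := .restrictScalars ℚ ℝ A
  have hcomm : exp (s • -(x + y)) * (x + y) = (x + y) * exp (s • -(x + y)) :=
    ((Commute.refl (x + y)).neg_left.smul_left s).exp_left.eq
  refine (((hasDerivAt_exp_smul_const x s).mul (hasDerivAt_exp_smul_const y s)).mul
    (hasDerivAt_exp_smul_const (-(x + y)) s)).congr_deriv ?_
  rw [Pi.mul_apply, mul_neg, hcomm]
  noncomm_ring

variable [StarRing A] [CStarRing A] [StarModule ℝ A]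

theorem exp_smul_mem_unitary {x : A} (hx : x ∈ skewAdjoint A) (t : ℝ) :
    exp (t • x) ∈ unitary A :=
  let +nondep : NormedAlgebra ℚ A := .restrictScalars ℚ ℝ A
  exp_mem_unitary_of_mem_skewAdjoint (skewAdjoint.smul_mem t hx)

theorem norm_exp_smul_sub_one_le {x : A} (hx : x ∈ skewAdjoint A) {t : ℝ} (ht : 0 ≤ t) :
    ‖exp (t • x) - 1‖ ≤ t * ‖x‖ := by
  have h := norm_image_sub_le_of_norm_deriv_le_segment' (f := fun s : ℝ => exp (s • x))
    (C := ‖x‖) (fun s _ => (hasDerivAt_exp_smul_const x s).hasDerivWithinAt)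
    (fun s _ => (CStarRing.norm_mem_unitary_mul x (exp_smul_mem_unitary hx s)).le) t ⟨ht, le_rfl⟩
  simpa [mul_comm] using h

theorem norm_trotterDefect_sub_one_le {x y : A} (hx : x ∈ skewAdjoint A)
    (hy : y ∈ skewAdjoint A) {t : ℝ} (ht : 0 ≤ t) :
    ‖trotterDefect x y t - 1‖ ≤ ‖x‖ * ‖y‖ * t ^ 2 := by
  have hxy : -(x + y) ∈ skewAdjoint A := neg_mem (add_mem hx hy)
  have bound : ∀ s ∈ Set.Ico 0 t,
      ‖exp (s • x) * (x * (exp (s • y) - 1) - (exp (s • y) - 1) * x) * exp (s • -(x + y))‖ ≤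
        ‖x‖ * ‖y‖ * (2 * s) := by
    rintro s ⟨hs, -⟩
    rw [CStarRing.norm_mul_mem_unitary _ (exp_smul_mem_unitary hxy s),
      CStarRing.norm_mem_unitary_mul _ (exp_smul_mem_unitary hx s)]
    calc _ ≤ 2 * ‖x‖ * ‖exp (s • y) - 1‖ := norm_commutator_le _ _
      _ ≤ 2 * ‖x‖ * (s * ‖y‖) := by gcongr; exact norm_exp_smul_sub_one_le hy hs
      _ = ‖x‖ * ‖y‖ * (2 * s) := by ring
  refine image_norm_le_of_norm_deriv_right_le_deriv_boundary (B := fun s => ‖x‖ * ‖y‖ * s ^ 2)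
    (fun s _ => ((hasDerivAt_trotterDefect x y s).sub_const 1).continuousAt.continuousWithinAt)
    (fun s _ => ((hasDerivAt_trotterDefect x y s).sub_const 1).hasDerivWithinAt)
    (by simp [trotterDefect]) (fun s => by simpa using (hasDerivAt_pow 2 s).const_mul (‖x‖ * ‖y‖))
    bound ⟨ht, le_rfl⟩

theorem norm_exp_smul_mul_exp_smul_sub_exp_smul_add_le {x y : A} (hx : x ∈ skewAdjoint A)
    (hy : y ∈ skewAdjoint A) {t : ℝ} (ht : 0 ≤ t) :
    ‖exp (t • x) * exp (t • y) - exp (t • (x + y))‖ ≤ t ^ 2 * ‖x‖ * ‖y‖ := by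
  let +nondep : NormedAlgebra ℚ A := .restrictScalars ℚ ℝ A
  have hinv : exp (t • -(x + y)) * exp (t • (x + y)) = 1 := by
    rw [smul_neg, ← exp_add_of_commute (Commute.refl _).neg_left, neg_add_cancel, exp_zero]
  have hsplit : exp (t • x) * exp (t • y) - exp (t • (x + y)) =
      (trotterDefect x y t - 1) * exp (t • (x + y)) := by
    rw [sub_mul, trotterDefect, mul_assoc, hinv, mul_one, one_mul]
  rw [hsplit, CStarRing.norm_mul_mem_unitary _ (exp_smul_mem_unitary (add_mem hx hy) t)]
  linarith [norm_trotterDefect_sub_one_le hx hy ht]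

theorem norm_list_prod_exp_smul_sub_exp_smul_sum_le {l : List A}
    (hl : ∀ x ∈ l, x ∈ skewAdjoint A) {t : ℝ} (ht : 0 ≤ t) :
    ‖(l.map fun x => exp (t • x)).prod - exp (t • l.sum)‖ ≤ t ^ 2 / 2 * (l.map norm).sum ^ 2 := by
  induction l with
  | nil => simp
  | cons a l ih =>
    obtain ⟨ha, hl⟩ := List.forall_mem_cons.mp hl
    set P := (l.map fun x => exp (t • x)).prod
    set N := (l.map norm).sum
    have hsum_le : ‖l.sum‖ ≤ N := List.le_sum_of_subadditive norm norm_zero.le norm_add_le l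
    have hsplit : exp (t • a) * P - exp (t • (a + l.sum)) =
        exp (t • a) * (P - exp (t • l.sum)) +
          (exp (t • a) * exp (t • l.sum) - exp (t • (a + l.sum))) := by
      noncomm_ring
    have hstep := norm_exp_smul_mul_exp_smul_sub_exp_smul_add_le ha
      ((skewAdjoint A).list_sum_mem hl) ht
    rw [List.map_cons, List.prod_cons, List.sum_cons, List.map_cons, List.sum_cons, hsplit]
    calc _ ≤ ‖P - exp (t • l.sum)‖ + t ^ 2 * ‖a‖ * ‖l.sum‖ := by
          grw [norm_add_le, CStarRing.norm_mem_unitary_mul _ (exp_smul_mem_unitary ha t), hstep]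
      _ ≤ t ^ 2 / 2 * N ^ 2 + t ^ 2 * ‖a‖ * N := by gcongr; exact ih hl
      _ ≤ t ^ 2 / 2 * (‖a‖ + N) ^ 2 := by nlinarith [sq_nonneg (t * ‖a‖)]

end

open Matrix
open scoped Matrix.Norms.L2Operator

/-- **Norm-scaling bound for the first-order Trotter formula.**
Let `H 1, …, H R` be Hermitian `d × d` complex matrices, `Hsum := ∑ r, H r`, and
`U₁(τ) := exp(−i H_R τ) ⋯ exp(−i H_1 τ)` (the factor with the largest index leftmost).
Then `‖U₁(τ) − exp(−i Hsum τ)‖ ≤ (τ²/2) (∑ r, ‖H r‖)²`,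
where `‖·‖` is the spectral norm. -/
theorem first_order_trotter_norm_scaling {d R : ℕ}
    (H : Fin R → Matrix (Fin d) (Fin d) ℂ) (hHerm : ∀ r, (H r).IsHermitian)
    (τ : ℝ) (hτ : 0 ≤ τ) :
    ‖(((List.finRange R).reverse.map
          (fun r => NormedSpace.exp ((-(Complex.I * (τ : ℂ))) • H r))).prod
        - NormedSpace.exp ((-(Complex.I * (τ : ℂ))) • ∑ r, H r))‖ ≤
      τ ^ 2 / 2 * (∑ r : Fin R, ‖H r‖) ^ 2 := by
  set X : Fin R → Matrix (Fin d) (Fin d) ℂ := fun r => (-Complex.I) • H r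
  have hX (r : Fin R) : X r ∈ skewAdjoint _ :=
    (hHerm r).isSelfAdjoint.smul_mem_skewAdjoint (neg_mem Complex.conj_I)
  have hτX (M : Matrix (Fin d) (Fin d) ℂ) :
      (-(Complex.I * (τ : ℂ))) • M = τ • (-Complex.I) • M := by
    rw [← smul_assoc]; congr 1; simp [Complex.real_smul]; ring
  have key := norm_list_prod_exp_smul_sub_exp_smul_sum_le (l := (List.finRange R).reverse.map X)
    (by simpa using hX) hτ
  have hsum : ((List.finRange R).reverse.map X).sum = ∑ r, X r := by
    rw [List.map_reverse, List.sum_reverse, Fin.sum_univ_def]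
  have hnorm : (((List.finRange R).reverse.map X).map norm).sum = ∑ r, ‖H r‖ := by
    rw [List.map_reverse, List.map_reverse, List.sum_reverse, List.map_map, Fin.sum_univ_def]
    simp [X, Function.comp_def, norm_smul]
  rw [hsum, hnorm, List.map_map] at key
  simpa [Function.comp_def, X, hτX, Finset.smul_sum] using key
end

section
/- Let H be a Hermitian d×d complex matrix, let C > 0, p > 1, T > 0, ε > 0, and let m be a positive integer with m ≥ (C T^p / ε)^{1/(p−1)}. Let U be a d×d complex matrix with ‖U‖ ≤ 1 such that ‖exp(−i H (T/m)) − U‖ ≤ C (T/m)^p. Then ‖exp(−i H T) − U^m‖ ≤ ε. -/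
/-!
The exact one-step propagator `V = exp(-i H T/m)` is unitary and `V ^ m = exp(-i H T)`.
Since left multiplication by a unitary is an isometry and `‖U‖ ≤ 1`, the one-step errors add up
at most linearly: `‖V ^ m - U ^ m‖ ≤ m ‖V - U‖ ≤ C T ^ p / m ^ (p - 1)`, which is at most `ε`
by the choice of `m`.
-/

open scoped Matrix.Norms.L2Operator

section CStarRing

variable {E : Type*} [NormedRing E] [StarRing E] [CStarRing E]

theorem norm_pow_sub_pow_le_of_mem_unitary {V U : E} (hV : V ∈ unitary E) (hU : ‖U‖ ≤ 1)
    (n : ℕ) : ‖V ^ n - U ^ n‖ ≤ n * ‖V - U‖ := by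
  induction n with
  | zero => simp
  | succ n ih =>
    have hsplit : V ^ (n + 1) - U ^ (n + 1) = V ^ n * (V - U) + (V ^ n - U ^ n) * U := by
      rw [pow_succ, pow_succ]; noncomm_ring
    calc ‖V ^ (n + 1) - U ^ (n + 1)‖
        ≤ ‖V ^ n * (V - U)‖ + ‖(V ^ n - U ^ n) * U‖ := hsplit ▸ norm_add_le _ _
      _ ≤ ‖V - U‖ + n * ‖V - U‖ * 1 := by
          rw [CStarRing.norm_mem_unitary_mul _ (pow_mem hV n)]
          grw [norm_mul_le, ih, hU]
      _ = (n + 1 : ℕ) * ‖V - U‖ := by push_cast; ring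

end CStarRing

section ComplexBanachAlgebra

variable {A : Type*} [NormedRing A] [NormedAlgebra ℂ A] [CompleteSpace A]

theorem exp_smul_eq_exp_div_smul_pow (z : ℂ) (x : A) {n : ℕ} (hn : n ≠ 0) :
    NormedSpace.exp (z • x) = NormedSpace.exp ((z / n) • x) ^ n := by
  let _ : NormedAlgebra ℚ A := NormedAlgebra.restrictScalars ℚ ℂ A
  rw [← NormedSpace.exp_nsmul, ← Nat.cast_smul_eq_nsmul ℂ, smul_smul,
    mul_div_cancel₀ z (Nat.cast_ne_zero.mpr hn)]

theorem exp_neg_I_mul_smul_mem_unitary [StarRing A] [ContinuousStar A] [StarModule ℂ A]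
    {H : A} (hH : IsSelfAdjoint H) (t : ℝ) :
    NormedSpace.exp ((-(Complex.I * t)) • H) ∈ unitary A := by
  let _ : NormedAlgebra ℚ A := NormedAlgebra.restrictScalars ℚ ℂ A
  refine NormedSpace.exp_mem_unitary_of_mem_skewAdjoint (hH.smul_mem_skewAdjoint ?_)
  simp [skewAdjoint.mem_iff]

end ComplexBanachAlgebra

theorem Real.mul_mul_div_rpow_le_of_rpow_le {C p T ε m : ℝ} (hC : 0 ≤ C) (hp : 1 < p)
    (hT : 0 ≤ T) (hε : 0 < ε) (hm : 0 < m) (h : (C * T ^ p / ε) ^ (1 / (p - 1)) ≤ m) :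
    m * (C * (T / m) ^ p) ≤ ε := by
  have hm_pow : C * T ^ p / ε ≤ m ^ (p - 1) := by
    rw [one_div] at h
    exact (Real.rpow_inv_le_iff_of_pos (by positivity) hm.le (by linarith)).mp h
  have hrewrite : m * (C * (T / m) ^ p) = C * T ^ p / m ^ (p - 1) := by
    rw [Real.div_rpow hT hm.le, Real.rpow_sub hm, Real.rpow_one]
    field_simp
  rw [hrewrite, div_le_iff₀ (by positivity), mul_comm ε]
  exact (div_le_iff₀ hε).mp hm_pow

/-- **Error-to-step-count conversion.**
If `H` is Hermitian, `C > 0`, `p > 1`, `T > 0`, `ε > 0`, `m` is a positive integer with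
`m ≥ (C T^p / ε)^(1/(p−1))`, and `U` is a matrix with `‖U‖ ≤ 1` satisfying
`‖exp(−i H (T/m)) − U‖ ≤ C (T/m)^p`, then `‖exp(−i H T) − U^m‖ ≤ ε`. -/
theorem trotter_error_to_global_error {d : ℕ}
    (H : Matrix (Fin d) (Fin d) ℂ) (hHerm : H.IsHermitian)
    (C p T ε : ℝ) (hC : 0 < C) (hp : 1 < p) (hT : 0 < T) (hε : 0 < ε)
    (m : ℕ) (hm : 0 < m)
    (hm' : (C * T ^ p / ε) ^ (1 / (p - 1)) ≤ (m : ℝ))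
    (U : Matrix (Fin d) (Fin d) ℂ) (hU : ‖U‖ ≤ 1)
    (hstep : ‖NormedSpace.exp ((-(Complex.I * ((T / (m : ℝ) : ℝ) : ℂ))) • H) - U‖ ≤
      C * (T / (m : ℝ)) ^ p) :
    ‖NormedSpace.exp ((-(Complex.I * (T : ℂ))) • H) - U ^ m‖ ≤ ε := by
  set V := NormedSpace.exp ((-(Complex.I * ((T / (m : ℝ) : ℝ) : ℂ))) • H)
  have hV : V ∈ unitary (Matrix (Fin d) (Fin d) ℂ) := exp_neg_I_mul_smul_mem_unitary hHerm _
  have hVm : NormedSpace.exp ((-(Complex.I * (T : ℂ))) • H) = V ^ m := by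
    rw [exp_smul_eq_exp_div_smul_pow _ _ hm.ne']
    congr 3
    push_cast
    ring
  calc ‖NormedSpace.exp ((-(Complex.I * (T : ℂ))) • H) - U ^ m‖
      = ‖V ^ m - U ^ m‖ := by rw [hVm]
    _ ≤ m * ‖V - U‖ := norm_pow_sub_pow_le_of_mem_unitary hV hU m
    _ ≤ m * (C * (T / m) ^ p) := by gcongr
    _ ≤ ε := Real.mul_mul_div_rpow_le_of_rpow_le hC.le hp hT.le hε (by positivity) hm'
end

section
/- Let G be an m×n complex matrix and let F be the (m+n)×(m+n) block matrix F = [[0, G], [Gᴴ, 0]]. Then: (i) ‖F‖₁ = ‖G‖₁ + ‖Gᴴ‖₁, and (ii) ‖F²‖₁ = 2‖Gᴴ G‖₁ = 2·Tr(Gᴴ G). -/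
/-! `√(Mᴴ M)` is the unique positive semidefinite square root of `Mᴴ M`, so `‖M‖₁ = Tr B` for every
positive semidefinite `B` with `B² = Mᴴ M`. Hence `‖M‖₁` depends only on `Mᴴ M`, is additive over
block-diagonal matrices, and equals `Tr A` when `A` itself is positive semidefinite.
For `F = [[0, G], [Gᴴ, 0]]` one has `Fᴴ F = diag(G Gᴴ, Gᴴ G) = Kᴴ K` with `K = diag(Gᴴ, G)`, which
gives (i). Moreover `F² = diag(G Gᴴ, Gᴴ G)` is positive semidefinite, so
`‖F²‖₁ = Tr(G Gᴴ) + Tr(Gᴴ G) = 2 Tr(Gᴴ G) = 2 ‖Gᴴ G‖₁`, which gives (ii). -/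

open Matrix
open scoped Matrix.Norms.L2Operator ComplexOrder

noncomputable def Matrix.PosSemidef.sqrt {n 𝕜 : Type*} [Fintype n] [DecidableEq n] [RCLike 𝕜]
    {A : Matrix n n 𝕜} (hA : A.PosSemidef) : Matrix n n 𝕜 :=
  hA.1.eigenvectorUnitary.1 * diagonal ((↑) ∘ (√·) ∘ hA.1.eigenvalues) *
  (star hA.1.eigenvectorUnitary : Matrix n n 𝕜)

noncomputable def traceNorm {m n : Type*} [Fintype m] [Fintype n] [DecidableEq n]
    (M : Matrix m n ℂ) : ℝ :=
  ((Matrix.posSemidef_conjTranspose_mul_self M).sqrt).trace.re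

open scoped MatrixOrder

namespace Matrix

variable {m n 𝕜 : Type*} [Fintype m] [Fintype n] [RCLike 𝕜]

lemma trace_fromBlocks {α : Type*} [AddCommMonoid α] (A : Matrix m m α) (B : Matrix m n α)
    (C : Matrix n m α) (D : Matrix n n α) :
    (fromBlocks A B C D).trace = A.trace + D.trace := by
  simp [trace, Fintype.sum_sum_type]

lemma PosSemidef.fromBlocks_zero {A : Matrix m m 𝕜} {D : Matrix n n 𝕜} (hA : A.PosSemidef)
    (hD : D.PosSemidef) : (fromBlocks A 0 0 D).PosSemidef := by
  refine .of_dotProduct_mulVec_nonneg (.fromBlocks hA.1 (by simp) hD.1) fun x => ?_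
  rw [← Sum.elim_comp_inl_inr x, fromBlocks_mulVec]
  simp only [zero_mulVec, add_zero, zero_add, Sum.elim_comp_inl, Sum.elim_comp_inr,
    Function.star_sumElim, sumElim_dotProduct_sumElim]
  exact add_nonneg (hA.dotProduct_mulVec_nonneg _) (hD.dotProduct_mulVec_nonneg _)

lemma PosSemidef.sqrt_eq_cfcSqrt [DecidableEq n] {A : Matrix n n 𝕜} (hA : A.PosSemidef) :
    hA.sqrt = CFC.sqrt A := by
  rw [CFC.sqrt_eq_cfc, cfc_nnreal_eq_real _ A, hA.1.cfc_eq]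
  simp only [IsHermitian.cfc, PosSemidef.sqrt, Unitary.conjStarAlgAut_apply]
  congr 3
  funext i
  simp [Real.coe_sqrt, max_eq_left (hA.eigenvalues_nonneg i)]

lemma PosSemidef.posSemidef_sqrt [DecidableEq n] {A : Matrix n n 𝕜} (hA : A.PosSemidef) :
    hA.sqrt.PosSemidef := by
  rw [hA.sqrt_eq_cfcSqrt]
  exact (CFC.sqrt_nonneg A).posSemidef

lemma PosSemidef.sqrt_mul_self [DecidableEq n] {A : Matrix n n 𝕜} (hA : A.PosSemidef) :
    hA.sqrt * hA.sqrt = A := by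
  rw [hA.sqrt_eq_cfcSqrt]
  exact CFC.sqrt_mul_sqrt_self A hA.nonneg

end Matrix

section TraceNorm

variable {m n p q : Type*} [Fintype m] [Fintype n] [Fintype p] [Fintype q]

lemma traceNorm_eq_re_trace_of_mul_self_eq [DecidableEq n] {M : Matrix m n ℂ}
    {B : Matrix n n ℂ} (hB : B.PosSemidef) (h : B * B = Mᴴ * M) :
    traceNorm M = B.trace.re := by
  rw [traceNorm, PosSemidef.sqrt_eq_cfcSqrt, CFC.sqrt_unique h hB.nonneg]

lemma traceNorm_congr [DecidableEq n] {M : Matrix m n ℂ} {N : Matrix p n ℂ}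
    (h : Mᴴ * M = Nᴴ * N) : traceNorm M = traceNorm N := by
  simp only [traceNorm, PosSemidef.sqrt_eq_cfcSqrt, h]

lemma Matrix.PosSemidef.traceNorm_eq_re_trace [DecidableEq n] {A : Matrix n n ℂ}
    (hA : A.PosSemidef) : traceNorm A = A.trace.re :=
  traceNorm_eq_re_trace_of_mul_self_eq hA (by rw [hA.1.eq])

lemma traceNorm_fromBlocks_zero [DecidableEq n] [DecidableEq q] (A : Matrix m n ℂ)
    (D : Matrix p q ℂ) : traceNorm (fromBlocks A 0 0 D) = traceNorm A + traceNorm D := by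
  have hA := posSemidef_conjTranspose_mul_self A
  have hD := posSemidef_conjTranspose_mul_self D
  rw [traceNorm_eq_re_trace_of_mul_self_eq (hA.posSemidef_sqrt.fromBlocks_zero hD.posSemidef_sqrt),
    trace_fromBlocks, Complex.add_re, traceNorm, traceNorm]
  simp [fromBlocks_conjTranspose, fromBlocks_multiply, hA.sqrt_mul_self, hD.sqrt_mul_self]

end TraceNorm

/-- For an `m × n` complex matrix `G` and the block matrix `F = [[0, G], [Gᴴ, 0]]`:
(i) `‖F‖₁ = ‖G‖₁ + ‖Gᴴ‖₁`, and (ii) `‖F²‖₁ = 2 ‖Gᴴ G‖₁ = 2 Tr(Gᴴ G)`. -/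
theorem traceNorm_fromBlocks_offDiagonal {m n : ℕ} (G : Matrix (Fin m) (Fin n) ℂ) :
    traceNorm (Matrix.fromBlocks 0 G Gᴴ 0) = traceNorm G + traceNorm Gᴴ ∧
    traceNorm (Matrix.fromBlocks 0 G Gᴴ 0 * Matrix.fromBlocks 0 G Gᴴ 0) =
      2 * traceNorm (Gᴴ * G) ∧
    traceNorm (Matrix.fromBlocks 0 G Gᴴ 0 * Matrix.fromBlocks 0 G Gᴴ 0) =
      2 * ((Gᴴ * G).trace).re := by
  set F := fromBlocks 0 G Gᴴ 0
  have hFF : F * F = fromBlocks (G * Gᴴ) 0 0 (Gᴴ * G) := by simp [F, fromBlocks_multiply]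
  have hF : Fᴴ * F = (fromBlocks Gᴴ 0 0 G)ᴴ * fromBlocks Gᴴ 0 0 G := by
    simp [F, fromBlocks_conjTranspose, fromBlocks_multiply]
  have hFF_traceNorm : traceNorm (F * F) = 2 * (Gᴴ * G).trace.re := by
    rw [hFF, traceNorm_fromBlocks_zero, (posSemidef_self_mul_conjTranspose G).traceNorm_eq_re_trace,
      (posSemidef_conjTranspose_mul_self G).traceNorm_eq_re_trace, trace_mul_comm G]
    ring
  refine ⟨?_, ?_, hFF_traceNorm⟩
  · rw [traceNorm_congr hF, traceNorm_fromBlocks_zero, add_comm]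
  · rw [hFF_traceNorm, (posSemidef_conjTranspose_mul_self G).traceNorm_eq_re_trace]
end

section
/- With the elastic-wave Hamiltonian H := Σ_{α=1}^{3} (i · B_cell^(−1/2) A^(α) B_cell^(−1/2)) ⊗ D^(α) defined in the context, one has ‖H‖ ≤ (3/h) · ρ^(−1/2) · ‖S_comp^(−1/2)‖. -/
/-!
Each summand is bounded with `‖X ⊗ Y‖ ≤ ‖X‖ ‖Y‖`.

Since `B_cell` is block diagonal, `B_cell^(−1/2) = diag(ρ^(−1/2) I₃, S_comp^(−1/2), I₇)`, so
`B_cell^(−1/2) A^(α) B_cell^(−1/2)` is the self-adjoint off-diagonal block matrix built from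
`K = ρ^(−1/2) [C^(α) S_comp^(−1/2) | 0]`; its norm is at most `‖K‖ ≤ ρ^(−1/2) ‖S_comp^(−1/2)‖`,
because `C^(α) C^(α)ᴴ = 1`.

Write `S_k^(α) = T_k − T_kᴴ` with `T_k = I₂^⊗(n−k) ⊗ σ01 ⊗ σ10^⊗(k−1)` in the `α`-th register.
Each `T_k` is a partial isometry, and for `k < k'` the `(n−k)`-th factors of `T_k` and `T_k'` are
`σ01` and `σ10`, so `T_kᴴ T_k' = 0 = T_k T_k'ᴴ`. Hence `(Σ T_k)ᴴ (Σ T_k)` is a projection,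
`‖Σ T_k‖ ≤ 1` and `‖D^(α)‖ ≤ 1/h`.

The norm bounds on `X ⊗ 1`, `1 ⊗ Y` and on block-diagonal matrices are instances of the
contractivity of ⋆-homomorphisms between C⋆-algebras.
-/

open Matrix
open scoped Matrix.Norms.L2Operator ComplexOrder Kronecker

noncomputable section

/-- The state-register index set, of cardinality `3 + 6 + 7 = 16`, corresponding to the
block partition of rows and columns into sizes `3 + 6 + 7`. -/
abbrev StateIdx : Type := Fin 3 ⊕ (Fin 6 ⊕ Fin 7)

/-- The three `3 × 6` matrices `C^(1), C^(2), C^(3)` (here indexed by `Fin 3`). -/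
def Cmat : Fin 3 → Matrix (Fin 3) (Fin 6) ℂ
  | 0 => !![1, 0, 0, 0, 0, 0; 0, 0, 0, 1, 0, 0; 0, 0, 0, 0, 1, 0]
  | 1 => !![0, 0, 0, 1, 0, 0; 0, 1, 0, 0, 0, 0; 0, 0, 0, 0, 0, 1]
  | 2 => !![0, 0, 0, 0, 1, 0; 0, 0, 0, 0, 0, 1; 0, 0, 1, 0, 0, 0]

/-- `A^(α)`: the `16 × 16` matrix with `C^(α)` as its `(1,2)` block, `(C^(α))ᵀ` as its `(2,1)`
block, and zero blocks elsewhere, in the block partition `3 + (6 + 7)`. -/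
def Amat (α : Fin 3) : Matrix StateIdx StateIdx ℂ :=
  Matrix.fromBlocks 0 (Matrix.fromCols (Cmat α) 0) (Matrix.fromRows (Cmat α)ᵀ 0) 0

/-- `B_cell = diag(ρ I₃, S_comp, I₇)`. -/
def Bcell (ρ : ℝ) (S : Matrix (Fin 6) (Fin 6) ℂ) : Matrix StateIdx StateIdx ℂ :=
  Matrix.fromBlocks ((ρ : ℂ) • 1) 0 0 (Matrix.fromBlocks S 0 0 1)

/-- `M^(−1/2)`: the inverse of the unique positive definite square root of a positive
definite matrix `M`. -/
def invSqrt {ι : Type*} [Fintype ι] [DecidableEq ι] {M : Matrix ι ι ℂ}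
    (hM : M.PosDef) : Matrix ι ι ℂ :=
  (hM.posSemidef.1.eigenvectorUnitary.1 * diagonal ((↑) ∘ (√·) ∘ hM.posSemidef.1.eigenvalues) *
    (star hM.posSemidef.1.eigenvectorUnitary : Matrix ι ι ℂ))⁻¹

/-- The spatial index set for `N` qubits, of cardinality `2^N`. -/
abbrev QubitIdx (N : ℕ) : Type := Fin N → Fin 2

def sigma01 : Matrix (Fin 2) (Fin 2) ℂ := !![0, 1; 0, 0]

def sigma10 : Matrix (Fin 2) (Fin 2) ℂ := !![0, 0; 1, 0]

/-- The Kronecker (tensor) product `f 0 ⊗ f 1 ⊗ ⋯ ⊗ f (N−1)` of a family of `2 × 2`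
matrices, realized on the index set `Fin N → Fin 2` (position `0` is the leftmost factor). -/
def tensorFamily {N : ℕ} (f : Fin N → Matrix (Fin 2) (Fin 2) ℂ) :
    Matrix (QubitIdx N) (QubitIdx N) ℂ :=
  Matrix.of fun x y => ∏ i, f i (x i) (y i)

/-- The factor at position `p ∈ {0, …, n−1}` of the pure tensor
`I₂^⊗(n−k) ⊗ a ⊗ b^⊗(k−1)` (for `1 ≤ k ≤ n`). -/
def cellFactor (n k : ℕ) (a b : Matrix (Fin 2) (Fin 2) ℂ) (p : ℕ) :
    Matrix (Fin 2) (Fin 2) ℂ :=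
  if p < n - k then 1 else if p = n - k then a else b

/-- `S_k^(α) = I₂^⊗(n(α−1)) ⊗ S_k^cell ⊗ I₂^⊗(n(3−α))` with
`S_k^cell = I₂^⊗(n−k) ⊗ σ01 ⊗ σ10^⊗(k−1) − I₂^⊗(n−k) ⊗ σ10 ⊗ σ01^⊗(k−1)`,
realized on `3n` qubits.  Here `α : Fin 3` is `0`-based and `1 ≤ k ≤ n`. -/
def Smat (n : ℕ) (α : Fin 3) (k : ℕ) :
    Matrix (QubitIdx (3 * n)) (QubitIdx (3 * n)) ℂ :=
  tensorFamily (fun i =>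
      if i.val / n = α.val then cellFactor n k sigma01 sigma10 (i.val % n) else 1) -
    tensorFamily (fun i =>
      if i.val / n = α.val then cellFactor n k sigma10 sigma01 (i.val % n) else 1)

/-- `D^(α) = (1/(2h)) ∑_{k=1}^n S_k^(α)`. -/
def Dmat (n : ℕ) (h : ℝ) (α : Fin 3) : Matrix (QubitIdx (3 * n)) (QubitIdx (3 * n)) ℂ :=
  (1 / (2 * (h : ℂ))) • ∑ k : Fin n, Smat n α (k.val + 1)

/-- The rank-one projector `P_j = |φ_j⟩⟨φ_j|`. -/
def Pmat (φ : Fin 16 → StateIdx → ℂ) (j : Fin 16) : Matrix StateIdx StateIdx ℂ :=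
  Matrix.vecMulVec (φ j) (star (φ j))

/-- `H_jk^(α) := P_j^(α) ⊗ (i λ_j^(α)/(2h)) S_k^(α)`. -/
def Hterm (n : ℕ) (h : ℝ) (lam : Fin 3 → Fin 16 → ℝ) (φ : Fin 3 → Fin 16 → StateIdx → ℂ)
    (α : Fin 3) (j : Fin 16) (k : Fin n) :
    Matrix (StateIdx × QubitIdx (3 * n)) (StateIdx × QubitIdx (3 * n)) ℂ :=
  Pmat (φ α) j ⊗ₖ ((Complex.I * (lam α j : ℂ) / (2 * (h : ℂ))) • Smat n α (k.val + 1))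

/-- The elastic-wave Hamiltonian `H = ∑_{α,j,k} H_jk^(α)`. -/
def Hfull (n : ℕ) (h : ℝ) (lam : Fin 3 → Fin 16 → ℝ) (φ : Fin 3 → Fin 16 → StateIdx → ℂ) :
    Matrix (StateIdx × QubitIdx (3 * n)) (StateIdx × QubitIdx (3 * n)) ℂ :=
  ∑ α : Fin 3, ∑ j : Fin 16, ∑ k : Fin n, Hterm n h lam φ α j k

/-- Ordered product `f (m−1) * f (m−2) * ⋯ * f 0` (largest index leftmost). -/
def prodDesc {M : Type*} [Monoid M] {m : ℕ} (f : Fin m → M) : M :=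
  ((List.finRange m).reverse.map f).prod

/-- Ordered product `f 0 * f 1 * ⋯ * f (m−1)` (smallest index leftmost). -/
def prodAsc {M : Type*} [Monoid M] {m : ℕ} (f : Fin m → M) : M :=
  ((List.finRange m).map f).prod

/-- The first-order Trotter operator `U₁(τ)`: the ordered product of the factors
`exp(−i H_jk^(α) τ)` over all triples `(α, j, k)`, in decreasing lexicographic order
(the factor with the largest `(α, j, k)` leftmost, the factor with the smallest rightmost). -/
def U1 (n : ℕ) (h : ℝ) (lam : Fin 3 → Fin 16 → ℝ) (φ : Fin 3 → Fin 16 → StateIdx → ℂ)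
    (τ : ℝ) : Matrix (StateIdx × QubitIdx (3 * n)) (StateIdx × QubitIdx (3 * n)) ℂ :=
  prodDesc fun α : Fin 3 => prodDesc fun j : Fin 16 => prodDesc fun k : Fin n =>
    NormedSpace.exp ((-(Complex.I * (τ : ℂ))) • Hterm n h lam φ α j k)

/-- The reversed-order product of the factors `exp(−i H_jk^(α) τ)`: increasing
lexicographic order in `(α, j, k)`. -/
def U1rev (n : ℕ) (h : ℝ) (lam : Fin 3 → Fin 16 → ℝ) (φ : Fin 3 → Fin 16 → StateIdx → ℂ)
    (τ : ℝ) : Matrix (StateIdx × QubitIdx (3 * n)) (StateIdx × QubitIdx (3 * n)) ℂ :=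
  prodAsc fun α : Fin 3 => prodAsc fun j : Fin 16 => prodAsc fun k : Fin n =>
    NormedSpace.exp ((-(Complex.I * (τ : ℂ))) • Hterm n h lam φ α j k)

/-- The second-order (symmetric) Trotter operator `U₂(τ) = U₁(τ/2) · Ũ₁(τ/2)`. -/
def U2 (n : ℕ) (h : ℝ) (lam : Fin 3 → Fin 16 → ℝ) (φ : Fin 3 → Fin 16 → StateIdx → ℂ)
    (τ : ℝ) : Matrix (StateIdx × QubitIdx (3 * n)) (StateIdx × QubitIdx (3 * n)) ℂ :=
  U1 n h lam φ (τ / 2) * U1rev n h lam φ (τ / 2)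

end

theorem Finset.sum_mul_sum_of_pairwise {ι R : Type*} [Fintype ι] [NonUnitalNonAssocSemiring R]
    (a b : ι → R) (h : Pairwise fun i j => a i * b j = 0) :
    (∑ i, a i) * ∑ j, b j = ∑ i, a i * b i := by
  rw [Finset.sum_mul_sum]
  exact Finset.sum_congr rfl fun i _ =>
    Finset.sum_eq_single i (fun j _ hji => h hji.symm) (by simp)

theorem norm_sum_le_one_of_pairwise {E ι : Type*} [NormedRing E] [StarRing E] [CStarRing E]
    [Fintype ι] (t : ι → E) (hpi : ∀ i, IsIdempotentElem (star (t i) * t i))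
    (horth : Pairwise fun i j => star (t i) * t j = 0 ∧ t i * star (t j) = 0) :
    ‖∑ i, t i‖ ≤ 1 := by
  have hstar : star (∑ i, t i) * ∑ i, t i = ∑ i, star (t i) * t i := by
    rw [star_sum, Finset.sum_mul_sum_of_pairwise _ _ fun i j hij => (horth hij).1]
  have hproj : IsStarProjection (∑ i, star (t i) * t i) := by
    refine ⟨?_, isSelfAdjoint_sum _ fun i _ => .star_mul_self (t i)⟩
    rw [IsIdempotentElem, Finset.sum_mul_sum_of_pairwise]
    · exact Finset.sum_congr rfl fun i _ => hpi i
    · intro i j hij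
      rw [mul_assoc, ← mul_assoc (t i), (horth hij).2, zero_mul, mul_zero]
  have h := hproj.norm_le _
  rw [← hstar, CStarRing.norm_star_mul_self] at h
  nlinarith [norm_nonneg (∑ i, t i)]

namespace Matrix

variable {m p q : Type*} [Fintype m] [Fintype p] [Fintype q] [DecidableEq m] [DecidableEq p]
  [DecidableEq q]

variable (m p) in
def kroneckerOneStarAlgHom : Matrix m m ℂ →⋆ₐ[ℂ] Matrix (m × p) (m × p) ℂ where
  toFun A := A ⊗ₖ 1
  map_one' := one_kronecker_one
  map_mul' A B := by rw [← mul_kronecker_mul, mul_one]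
  map_zero' := zero_kronecker _
  map_add' A B := add_kronecker _ _ _
  commutes' c := by simp [Algebra.algebraMap_eq_smul_one, smul_kronecker]
  map_star' A := by simp [star_eq_conjTranspose, conjTranspose_kronecker]

variable (m p) in
def oneKroneckerStarAlgHom : Matrix p p ℂ →⋆ₐ[ℂ] Matrix (m × p) (m × p) ℂ where
  toFun B := 1 ⊗ₖ B
  map_one' := one_kronecker_one
  map_mul' A B := by rw [← mul_kronecker_mul, mul_one]
  map_zero' := kronecker_zero _
  map_add' A B := kronecker_add _ _ _
  commutes' c := by simp [Algebra.algebraMap_eq_smul_one, kronecker_smul]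
  map_star' A := by simp [star_eq_conjTranspose, conjTranspose_kronecker]

theorem l2_opNorm_kronecker_le (A : Matrix m m ℂ) (B : Matrix p p ℂ) :
    ‖A ⊗ₖ B‖ ≤ ‖A‖ * ‖B‖ := by
  have hAB : A ⊗ₖ B = kroneckerOneStarAlgHom m p A * oneKroneckerStarAlgHom m p B := by
    simp [kroneckerOneStarAlgHom, oneKroneckerStarAlgHom, ← mul_kronecker_mul]
  rw [hAB]
  exact (norm_mul_le _ _).trans (mul_le_mul (NonUnitalStarAlgHom.norm_apply_le _ A)
    (NonUnitalStarAlgHom.norm_apply_le _ B) (norm_nonneg _) (norm_nonneg _))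

variable (m p) in
def fromBlocksStarAlgHom : Matrix m m ℂ × Matrix p p ℂ →⋆ₐ[ℂ] Matrix (m ⊕ p) (m ⊕ p) ℂ where
  toFun A := fromBlocks A.1 0 0 A.2
  map_one' := fromBlocks_one
  map_mul' A B := by simp [fromBlocks_multiply]
  map_zero' := by simp
  map_add' A B := by simp [fromBlocks_add]
  commutes' c := by simp [Algebra.algebraMap_eq_smul_one, fromBlocks_smul, ← fromBlocks_one]
  map_star' A := by simp [star_eq_conjTranspose, fromBlocks_conjTranspose]

theorem l2_opNorm_fromBlocks_zero_le (A : Matrix m m ℂ) (D : Matrix p p ℂ) :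
    ‖fromBlocks A 0 0 D‖ ≤ max ‖A‖ ‖D‖ :=
  NonUnitalStarAlgHom.norm_apply_le (fromBlocksStarAlgHom m p) (A, D)

theorem l2_opNorm_fromBlocks_zero_conjTranspose_le (K : Matrix m p ℂ) :
    ‖fromBlocks 0 K Kᴴ 0‖ ≤ ‖K‖ := by
  have hsq : (fromBlocks 0 K Kᴴ 0)ᴴ * fromBlocks 0 K Kᴴ 0 =
      fromBlocks (K * Kᴴ) 0 0 (Kᴴ * K) := by
    simp [fromBlocks_conjTranspose, fromBlocks_multiply]
  have hKKh : ‖K * Kᴴ‖ = ‖K‖ * ‖K‖ := by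
    simpa [l2_opNorm_conjTranspose] using l2_opNorm_conjTranspose_mul_self Kᴴ
  refine (mul_self_le_mul_self_iff (norm_nonneg _) (norm_nonneg _)).2 ?_
  rw [← l2_opNorm_conjTranspose_mul_self, hsq]
  refine (l2_opNorm_fromBlocks_zero_le _ _).trans ?_
  rw [hKKh, l2_opNorm_conjTranspose_mul_self, max_self]

theorem l2_opNorm_fromCols_zero (K : Matrix m p ℂ) : ‖fromCols K (0 : Matrix m q ℂ)‖ = ‖K‖ := by
  have h := l2_opNorm_conjTranspose_mul_self (fromCols K (0 : Matrix m q ℂ))ᴴ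
  rw [l2_opNorm_conjTranspose, conjTranspose_conjTranspose,
    conjTranspose_fromCols_eq_fromRows_conjTranspose, fromCols_mul_fromRows, Matrix.zero_mul,
    add_zero] at h
  have h' := l2_opNorm_conjTranspose_mul_self Kᴴ
  rw [l2_opNorm_conjTranspose, conjTranspose_conjTranspose] at h'
  exact (mul_self_inj (norm_nonneg _) (norm_nonneg _)).1 (h.symm.trans h')

theorem fromBlocks_zero_mul_fromBlocks_mul_conjTranspose {α : Type*} [Semiring α] [StarRing α]
    (P : Matrix m m α) (Q : Matrix p p α) (J : Matrix m p α) :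
    fromBlocks P 0 0 Q * fromBlocks 0 J Jᴴ 0 * (fromBlocks P 0 0 Q)ᴴ =
      fromBlocks 0 (P * J * Qᴴ) (P * J * Qᴴ)ᴴ 0 := by
  simp [fromBlocks_conjTranspose, fromBlocks_multiply, Matrix.mul_assoc]

end Matrix

section InvSqrt

open scoped MatrixOrder

variable {ι m p : Type*} [Fintype ι] [DecidableEq ι] [Fintype m] [DecidableEq m] [Fintype p]
  [DecidableEq p]

theorem invSqrt_eq_inv_sqrt {M : Matrix ι ι ℂ} (hM : M.PosDef) :
    invSqrt hM = (CFC.sqrt M)⁻¹ := by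
  rw [invSqrt, CFC.sqrt_eq_cfc, cfc_nnreal_eq_real _ M hM.posSemidef.nonneg,
    hM.posSemidef.1.cfc_eq]
  simp only [IsHermitian.cfc, Unitary.conjStarAlgAut_apply]
  unfold Real.sqrt
  rfl

theorem isHermitian_invSqrt {M : Matrix ι ι ℂ} (hM : M.PosDef) : (invSqrt hM).IsHermitian := by
  rw [invSqrt_eq_inv_sqrt]
  exact (CFC.sqrt_nonneg M).posSemidef.isHermitian.inv

theorem invSqrt_one (h : (1 : Matrix ι ι ℂ).PosDef) : invSqrt h = 1 := by
  rw [invSqrt_eq_inv_sqrt, CFC.sqrt_one, inv_one]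

theorem invSqrt_smul_one {c : ℝ} (hc : 0 < c) (h : ((c : ℂ) • (1 : Matrix ι ι ℂ)).PosDef) :
    invSqrt h = ((√c)⁻¹ : ℂ) • 1 := by
  have hsqrt : CFC.sqrt ((c : ℂ) • (1 : Matrix ι ι ℂ)) = (√c : ℂ) • 1 := by
    refine CFC.sqrt_unique ?_ ?_
    · rw [smul_mul_smul, one_mul, ← Complex.ofReal_mul, Real.mul_self_sqrt hc.le]
    · exact smul_nonneg (by exact_mod_cast Real.sqrt_nonneg c) zero_le_one
  have hne : (√c : ℂ) ≠ 0 := by exact_mod_cast (Real.sqrt_pos.2 hc).ne'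
  rw [invSqrt_eq_inv_sqrt, hsqrt]
  refine inv_eq_left_inv ?_
  rw [smul_mul_smul, one_mul, inv_mul_cancel₀ hne, one_smul]

theorem sqrt_fromBlocks_zero {A : Matrix m m ℂ} {D : Matrix p p ℂ} (hA : 0 ≤ A) (hD : 0 ≤ D) :
    CFC.sqrt (fromBlocks A 0 0 D) = fromBlocks (CFC.sqrt A) 0 0 (CFC.sqrt D) := by
  refine CFC.sqrt_unique ?_ ?_
  · simp [fromBlocks_multiply, CFC.sqrt_mul_sqrt_self A hA, CFC.sqrt_mul_sqrt_self D hD]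
  · exact map_nonneg (fromBlocksStarAlgHom m p)
      (Prod.mk_le_mk.2 ⟨CFC.sqrt_nonneg A, CFC.sqrt_nonneg D⟩)

theorem invSqrt_fromBlocks_zero {A : Matrix m m ℂ} {D : Matrix p p ℂ} (hA : A.PosDef)
    (hD : D.PosDef) (h : (fromBlocks A 0 0 D).PosDef) :
    invSqrt h = fromBlocks (invSqrt hA) 0 0 (invSqrt hD) := by
  rw [invSqrt_eq_inv_sqrt, invSqrt_eq_inv_sqrt, invSqrt_eq_inv_sqrt,
    sqrt_fromBlocks_zero hA.posSemidef.nonneg hD.posSemidef.nonneg,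
    inv_fromBlocks_zero₂₁_of_isUnit_iff]
  · simp
  · rw [CFC.isUnit_sqrt_iff A hA.posSemidef.nonneg, CFC.isUnit_sqrt_iff D hD.posSemidef.nonneg]
    exact iff_of_true hA.isUnit hD.isUnit

end InvSqrt

theorem invSqrt_Bcell {ρ : ℝ} (hρ : 0 < ρ) {S : Matrix (Fin 6) (Fin 6) ℂ} (hS : S.PosDef)
    (hB : (Bcell ρ S).PosDef) :
    invSqrt hB = fromBlocks (((√ρ)⁻¹ : ℂ) • 1) 0 0 (fromBlocks (invSqrt hS) 0 0 1) := by
  have hρ1 : ((ρ : ℂ) • (1 : Matrix (Fin 3) (Fin 3) ℂ)).PosDef :=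
    PosDef.one.smul (by exact_mod_cast hρ)
  have hS1 : (fromBlocks S 0 0 (1 : Matrix (Fin 7) (Fin 7) ℂ)).PosDef :=
    hB.submatrix Sum.inr_injective
  calc invSqrt hB = fromBlocks (invSqrt hρ1) 0 0 (invSqrt hS1) := invSqrt_fromBlocks_zero hρ1 hS1 hB
    _ = _ := by
      rw [invSqrt_smul_one hρ, invSqrt_fromBlocks_zero hS PosDef.one, invSqrt_one]

theorem Cmat_mul_conjTranspose (α : Fin 3) : Cmat α * (Cmat α)ᴴ = 1 := by
  fin_cases α <;> ext i j <;> fin_cases i <;> fin_cases j <;>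
    simp [Cmat, mul_apply, Fin.sum_univ_six, one_apply]

theorem norm_Cmat_le_one (α : Fin 3) : ‖Cmat α‖ ≤ 1 := by
  have h := l2_opNorm_conjTranspose_mul_self (Cmat α)ᴴ
  rw [conjTranspose_conjTranspose, Cmat_mul_conjTranspose, l2_opNorm_conjTranspose,
    CStarRing.norm_one] at h
  nlinarith [norm_nonneg (Cmat α)]

theorem Amat_eq_fromBlocks (α : Fin 3) :
    Amat α =
      fromBlocks 0 (fromCols (Cmat α) 0) (fromCols (Cmat α) (0 : Matrix _ (Fin 7) ℂ))ᴴ 0 := by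
  have hC : (Cmat α)ᵀ = (Cmat α)ᴴ := by
    fin_cases α <;> ext i j <;> fin_cases i <;> fin_cases j <;> simp [Cmat]
  rw [Amat, conjTranspose_fromCols_eq_fromRows_conjTranspose, hC, conjTranspose_zero]

theorem norm_invSqrt_Bcell_mul_Amat_mul_le {ρ : ℝ} (hρ : 0 < ρ) {S : Matrix (Fin 6) (Fin 6) ℂ}
    (hS : S.PosDef) (hB : (Bcell ρ S).PosDef) (α : Fin 3) :
    ‖invSqrt hB * Amat α * invSqrt hB‖ ≤ (√ρ)⁻¹ * ‖invSqrt hS‖ := by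
  nth_rewrite 2 [← (isHermitian_invSqrt hB).eq]
  rw [invSqrt_Bcell hρ hS hB, Amat_eq_fromBlocks, fromBlocks_zero_mul_fromBlocks_mul_conjTranspose]
  refine (l2_opNorm_fromBlocks_zero_conjTranspose_le _).trans ?_
  simp only [smul_mul, Matrix.one_mul, fromBlocks_conjTranspose, conjTranspose_one,
    conjTranspose_zero, fromCols_mul_fromBlocks, Matrix.mul_zero, Matrix.zero_mul, add_zero,
    norm_smul]
  rw [l2_opNorm_fromCols_zero, norm_inv, Complex.norm_real,
    Real.norm_of_nonneg (Real.sqrt_nonneg _)]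
  gcongr
  calc ‖Cmat α * (invSqrt hS)ᴴ‖ ≤ ‖Cmat α‖ * ‖(invSqrt hS)ᴴ‖ := l2_opNorm_mul _ _
    _ ≤ ‖invSqrt hS‖ := by
      rw [l2_opNorm_conjTranspose]
      exact mul_le_of_le_one_left (norm_nonneg _) (norm_Cmat_le_one α)

theorem tensorFamily_mul {N : ℕ} (f g : Fin N → Matrix (Fin 2) (Fin 2) ℂ) :
    tensorFamily f * tensorFamily g = tensorFamily (fun i => f i * g i) := by
  ext x y
  simp only [tensorFamily, mul_apply, of_apply, Finset.prod_univ_sum, Fintype.piFinset_univ,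
    Finset.prod_mul_distrib]

theorem tensorFamily_conjTranspose {N : ℕ} (f : Fin N → Matrix (Fin 2) (Fin 2) ℂ) :
    (tensorFamily f)ᴴ = tensorFamily (fun i => (f i)ᴴ) := by
  ext x y
  simp only [tensorFamily, conjTranspose_apply, of_apply, star_prod]

theorem tensorFamily_eq_zero {N : ℕ} {f : Fin N → Matrix (Fin 2) (Fin 2) ℂ} (i : Fin N)
    (hi : f i = 0) : tensorFamily f = 0 := by
  ext x y
  exact Finset.prod_eq_zero (Finset.mem_univ i) (by rw [hi, Matrix.zero_apply])

theorem isIdempotentElem_tensorFamily {N : ℕ} {f : Fin N → Matrix (Fin 2) (Fin 2) ℂ}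
    (hf : ∀ i, IsIdempotentElem (f i)) : IsIdempotentElem (tensorFamily f) := by
  rw [IsIdempotentElem, tensorFamily_mul]
  exact congrArg _ (funext hf)

theorem sigma01_conjTranspose : sigma01ᴴ = sigma10 := by
  ext i j; fin_cases i <;> fin_cases j <;> simp [sigma01, sigma10]

theorem sigma10_conjTranspose : sigma10ᴴ = sigma01 := by
  rw [← sigma01_conjTranspose, conjTranspose_conjTranspose]

theorem sigma01_mul_self : sigma01 * sigma01 = 0 := by
  ext i j; fin_cases i <;> fin_cases j <;> simp [sigma01, mul_apply]

theorem sigma10_mul_self : sigma10 * sigma10 = 0 := by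
  ext i j; fin_cases i <;> fin_cases j <;> simp [sigma10, mul_apply]

theorem isIdempotentElem_sigma01_mul_sigma10 : IsIdempotentElem (sigma01 * sigma10) := by
  ext i j; fin_cases i <;> fin_cases j <;> simp [sigma01, sigma10, mul_apply]

theorem isIdempotentElem_sigma10_mul_sigma01 : IsIdempotentElem (sigma10 * sigma01) := by
  ext i j; fin_cases i <;> fin_cases j <;> simp [sigma01, sigma10, mul_apply]

def cellFamily (n : ℕ) (α : Fin 3) (k : ℕ) (a b : Matrix (Fin 2) (Fin 2) ℂ) :
    Fin (3 * n) → Matrix (Fin 2) (Fin 2) ℂ :=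
  fun i => if i.val / n = α.val then cellFactor n k a b (i.val % n) else 1

theorem cellFamily_induction {n : ℕ} {α : Fin 3} {k : ℕ} {a b : Matrix (Fin 2) (Fin 2) ℂ}
    {P : Matrix (Fin 2) (Fin 2) ℂ → Prop} (h1 : P 1) (ha : P a) (hb : P b) (i : Fin (3 * n)) :
    P (cellFamily n α k a b i) := by
  unfold cellFamily cellFactor
  split_ifs <;> assumption

theorem cellFamily_conjTranspose (n : ℕ) (α : Fin 3) (k : ℕ) (a b : Matrix (Fin 2) (Fin 2) ℂ)
    (i : Fin (3 * n)) : (cellFamily n α k a b i)ᴴ = cellFamily n α k aᴴ bᴴ i := by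
  unfold cellFamily cellFactor
  split_ifs <;> simp

theorem exists_cellFamily_eq_of_lt {n k k' : ℕ} (α : Fin 3) (a b : Matrix (Fin 2) (Fin 2) ℂ)
    (hk : 1 ≤ k) (hkk' : k < k') (hk' : k' ≤ n) :
    ∃ i, cellFamily n α k a b i = a ∧ cellFamily n α k' a b i = b := by
  have hα : n * α.val + n ≤ 3 * n := by
    have := Nat.mul_le_mul_left n (Nat.succ_le_of_lt α.isLt)
    linarith
  have hdiv : (n * α.val + (n - k)) / n = α.val := by
    rw [Nat.mul_add_div (by omega), Nat.div_eq_of_lt (by omega), add_zero]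
  have hmod : (n * α.val + (n - k)) % n = n - k := by
    rw [Nat.mul_add_mod, Nat.mod_eq_of_lt (by omega)]
  refine ⟨⟨n * α.val + (n - k), by omega⟩, ?_, ?_⟩ <;>
    simp only [cellFamily, cellFactor, hdiv, hmod, if_true] <;> split_ifs <;> first | rfl | omega

def shiftTerm (n : ℕ) (α : Fin 3) (k : ℕ) : Matrix (QubitIdx (3 * n)) (QubitIdx (3 * n)) ℂ :=
  tensorFamily (cellFamily n α k sigma01 sigma10)

theorem Smat_eq_shiftTerm_sub_star (n : ℕ) (α : Fin 3) (k : ℕ) :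
    Smat n α k = shiftTerm n α k - star (shiftTerm n α k) := by
  simp only [shiftTerm, star_eq_conjTranspose, tensorFamily_conjTranspose,
    cellFamily_conjTranspose, sigma01_conjTranspose, sigma10_conjTranspose]
  rfl

theorem isIdempotentElem_star_shiftTerm_mul_self (n : ℕ) (α : Fin 3) (k : ℕ) :
    IsIdempotentElem (star (shiftTerm n α k) * shiftTerm n α k) := by
  rw [shiftTerm, star_eq_conjTranspose, tensorFamily_conjTranspose, tensorFamily_mul]
  refine isIdempotentElem_tensorFamily fun i => ?_
  refine cellFamily_induction (P := fun x => IsIdempotentElem (xᴴ * x)) ?_ ?_ ?_ i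
  · simp [IsIdempotentElem]
  · rw [sigma01_conjTranspose]; exact isIdempotentElem_sigma10_mul_sigma01
  · rw [sigma10_conjTranspose]; exact isIdempotentElem_sigma01_mul_sigma10

theorem shiftTerm_orthogonal_of_lt {n k k' : ℕ} (α : Fin 3) (hk : 1 ≤ k) (hkk' : k < k')
    (hk' : k' ≤ n) :
    star (shiftTerm n α k) * shiftTerm n α k' = 0 ∧
      shiftTerm n α k * star (shiftTerm n α k') = 0 := by
  obtain ⟨i, hi, hi'⟩ := exists_cellFamily_eq_of_lt α sigma01 sigma10 hk hkk' hk'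
  simp only [shiftTerm, star_eq_conjTranspose, tensorFamily_conjTranspose, tensorFamily_mul]
  refine ⟨tensorFamily_eq_zero i ?_, tensorFamily_eq_zero i ?_⟩
  · rw [hi, hi', sigma01_conjTranspose, sigma10_mul_self]
  · rw [hi, hi', sigma10_conjTranspose, sigma01_mul_self]

theorem norm_Dmat_le (n : ℕ) {h : ℝ} (hh : 0 < h) (α : Fin 3) : ‖Dmat n h α‖ ≤ 1 / h := by
  set P := ∑ k : Fin n, shiftTerm n α (k + 1)
  have hP : ‖P‖ ≤ 1 := by
    refine norm_sum_le_one_of_pairwise _ (fun k => isIdempotentElem_star_shiftTerm_mul_self ..) ?_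
    intro k k' hkk'
    rcases lt_or_gt_of_ne (Fin.val_ne_of_ne hkk') with hlt | hgt
    · exact shiftTerm_orthogonal_of_lt α (Nat.le_add_left 1 _) (Nat.succ_lt_succ hlt) k'.isLt
    · obtain ⟨h₁, h₂⟩ :=
        shiftTerm_orthogonal_of_lt α (Nat.le_add_left 1 _) (Nat.succ_lt_succ hgt) k.isLt
      exact ⟨by simpa using congrArg star h₁, by simpa using congrArg star h₂⟩
  have hD : Dmat n h α = (1 / (2 * h) : ℂ) • (P - star P) := by
    simp only [Dmat, Smat_eq_shiftTerm_sub_star, Finset.sum_sub_distrib, P, star_sum]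
  have hc : ‖(1 / (2 * h) : ℂ)‖ = 1 / (2 * h) := by
    rw [norm_div, norm_one, norm_mul, Complex.norm_ofNat, Complex.norm_real,
      Real.norm_of_nonneg hh.le]
  calc ‖Dmat n h α‖ ≤ 1 / (2 * h) * (‖P‖ + ‖star P‖) := by
        rw [hD, norm_smul, hc]; gcongr; exact norm_sub_le _ _
    _ ≤ 1 / (2 * h) * (1 + 1) := by rw [norm_star]; gcongr
    _ = 1 / h := by ring

theorem elastic_hamiltonian_norm_bound_general
    (ρ : ℝ) (hρ : 0 < ρ) (S : Matrix (Fin 6) (Fin 6) ℂ) (hS : S.PosDef)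
    (hB : (Bcell ρ S).PosDef)
    (n : ℕ) (h : ℝ) (hh : 0 < h) :
    ‖∑ α : Fin 3, (Complex.I • (invSqrt hB * Amat α * invSqrt hB)) ⊗ₖ Dmat n h α‖ ≤
      3 / h * (ρ ^ (-(1 / 2) : ℝ) * ‖invSqrt hS‖) := by
  have hterm : ∀ α : Fin 3,
      ‖(Complex.I • (invSqrt hB * Amat α * invSqrt hB)) ⊗ₖ Dmat n h α‖ ≤
        (√ρ)⁻¹ * ‖invSqrt hS‖ * (1 / h) := fun α => by
    refine (l2_opNorm_kronecker_le _ _).trans ?_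
    rw [norm_smul, Complex.norm_I, one_mul]
    exact mul_le_mul (norm_invSqrt_Bcell_mul_Amat_mul_le hρ hS hB α) (norm_Dmat_le n hh α)
      (norm_nonneg _) (by positivity)
  calc _ ≤ ∑ α : Fin 3, ‖(Complex.I • (invSqrt hB * Amat α * invSqrt hB)) ⊗ₖ Dmat n h α‖ :=
        norm_sum_le _ _
    _ ≤ ∑ _α : Fin 3, (√ρ)⁻¹ * ‖invSqrt hS‖ * (1 / h) := Finset.sum_le_sum fun α _ => hterm α
    _ = 3 / h * (ρ ^ (-(1 / 2) : ℝ) * ‖invSqrt hS‖) := by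
        rw [Finset.sum_const, Finset.card_univ, Fintype.card_fin, Real.rpow_neg hρ.le,
          ← Real.sqrt_eq_rpow]
        ring

/-- **Operator-norm bound on the elastic-wave Hamiltonian**
`H = ∑_α (i B_cell^(−1/2) A^(α) B_cell^(−1/2)) ⊗ D^(α)`:
`‖H‖ ≤ (3/h) ρ^(−1/2) ‖S_comp^(−1/2)‖`. -/
theorem elastic_hamiltonian_norm_bound
    (ρ : ℝ) (hρ : 0 < ρ) (S : Matrix (Fin 6) (Fin 6) ℂ) (hS : S.PosDef)
    (hB : (Bcell ρ S).PosDef)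
    (n : ℕ) (hn : 1 ≤ n) (h : ℝ) (hh : 0 < h) :
    ‖∑ α : Fin 3, (Complex.I • (invSqrt hB * Amat α * invSqrt hB)) ⊗ₖ Dmat n h α‖ ≤
      3 / h * (ρ ^ (-(1 / 2) : ℝ) * ‖invSqrt hS‖) :=
  elastic_hamiltonian_norm_bound_general ρ hρ S hS hB n h hh
end

section
/- Let σ ≥ 0 and τ ≥ 0 be reals with τσ < 2, and let M be the 2×2 real matrix M = [[1 − τ²σ²/2, τσ(1 − τ²σ²/4)], [−τσ, 1 − τ²σ²/2]]. Then for every natural number m, ‖M^m‖ ≤ (1 − τ²σ²/4)^(−1/2). -/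
open Matrix
open scoped Matrix.Norms.L2Operator

/-!
Write `x = τσ` and `c = √(1 - x²/4)`. With `S = diag(1, c)` the propagator factors as
`M = S⁻¹ Q S`, where `Q = [[1 - x²/2, x c], [-x c, 1 - x²/2]]` is a rotation
(`(1 - x²/2)² + x² c² = 1`). Hence `M^m = S⁻¹ Q^m S`, and since `Q^m` is orthogonal,
`‖M^m‖ ≤ ‖S⁻¹‖ ‖S‖ = c⁻¹`.
-/

theorem norm_pow_units_inv_mul_mul_le {E : Type*} [NormedRing E] [StarRing E] [CStarRing E]
    [Nontrivial E] (u : Eˣ) {q : E} (hq : q ∈ unitary E) (n : ℕ) :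
    ‖((↑u⁻¹ : E) * q * u) ^ n‖ ≤ ‖(↑u⁻¹ : E)‖ * ‖(u : E)‖ := by
  rw [Units.conj_pow']
  calc _ ≤ ‖(↑u⁻¹ : E)‖ * ‖q ^ n‖ * ‖(u : E)‖ := norm_mul₃_le
    _ = _ := by rw [CStarRing.norm_of_mem_unitary (pow_mem hq n), mul_one]

theorem fin_two_rotation_mem_unitary {a b : ℝ} (h : a ^ 2 + b ^ 2 = 1) :
    !![a, b; -b, a] ∈ unitary (Matrix (Fin 2) (Fin 2) ℝ) := by
  rw [← Matrix.unitaryGroup, mem_unitaryGroup_iff', star_eq_conjTranspose,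
    conjTranspose_eq_transpose_of_trivial]
  ext i j
  fin_cases i <;> fin_cases j <;> simp [mul_apply, Fin.sum_univ_two] <;> grind

def diagonalUnitOfNeZero {n K : Type*} [Fintype n] [DecidableEq n] [DivisionRing K]
    (d : n → K) (hd : ∀ i, d i ≠ 0) : (Matrix n n K)ˣ where
  val := diagonal d
  inv := diagonal d⁻¹
  val_inv := by
    rw [diagonal_mul_diagonal, ← diagonal_one]
    exact congrArg diagonal (funext fun i => mul_inv_cancel₀ (hd i))
  inv_val := by
    rw [diagonal_mul_diagonal, ← diagonal_one]
    exact congrArg diagonal (funext fun i => inv_mul_cancel₀ (hd i))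

noncomputable def leapfrogMatrix (x : ℝ) : Matrix (Fin 2) (Fin 2) ℝ :=
  !![1 - x ^ 2 / 2, x * (1 - x ^ 2 / 4); -x, 1 - x ^ 2 / 2]

theorem leapfrogMatrix_eq_diagonal_inv_mul_rotation_mul {x c : ℝ} (hc : c ^ 2 = 1 - x ^ 2 / 4)
    (hc0 : c ≠ 0) :
    leapfrogMatrix x = diagonal (![1, c] : Fin 2 → ℝ)⁻¹ *
      !![1 - x ^ 2 / 2, x * c; -(x * c), 1 - x ^ 2 / 2] * diagonal ![1, c] := by
  ext i j
  fin_cases i <;> fin_cases j <;> simp [leapfrogMatrix, mul_apply, Fin.sum_univ_two]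
  · linear_combination -x * hc
  all_goals field_simp

theorem norm_leapfrogMatrix_pow_le {x : ℝ} (hx : x ^ 2 < 4) (m : ℕ) :
    ‖leapfrogMatrix x ^ m‖ ≤ (1 - x ^ 2 / 4) ^ (-(1 / 2) : ℝ) := by
  have hpos : 0 < 1 - x ^ 2 / 4 := by linarith
  set c := √(1 - x ^ 2 / 4)
  have hc0 : 0 < c := Real.sqrt_pos.2 hpos
  have hc1 : c ≤ 1 := Real.sqrt_le_one.2 (by linarith [sq_nonneg x])
  have hc2 : c ^ 2 = 1 - x ^ 2 / 4 := Real.sq_sqrt hpos.le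
  have hd : ∀ i, (![1, c] : Fin 2 → ℝ) i ≠ 0 := Fin.forall_fin_two.2 ⟨one_ne_zero, hc0.ne'⟩
  set S : (Matrix (Fin 2) (Fin 2) ℝ)ˣ := diagonalUnitOfNeZero ![1, c] hd
  set Q : Matrix (Fin 2) (Fin 2) ℝ := !![1 - x ^ 2 / 2, x * c; -(x * c), 1 - x ^ 2 / 2]
  have hS : ‖(S : Matrix (Fin 2) (Fin 2) ℝ)‖ ≤ 1 := by
    rw [show (S : Matrix (Fin 2) (Fin 2) ℝ) = diagonal ![1, c] from rfl, l2_opNorm_diagonal,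
      pi_norm_le_iff_of_nonneg zero_le_one, Fin.forall_fin_two]
    simp [abs_of_pos hc0, hc1]
  have hS_inv : ‖(↑S⁻¹ : Matrix (Fin 2) (Fin 2) ℝ)‖ ≤ c⁻¹ := by
    rw [show (↑S⁻¹ : Matrix (Fin 2) (Fin 2) ℝ) = diagonal ![1, c]⁻¹ from rfl, l2_opNorm_diagonal,
      pi_norm_le_iff_of_nonneg (by positivity), Fin.forall_fin_two]
    simp [abs_of_pos hc0, one_le_inv₀ hc0, hc1]
  have hQ : Q ∈ unitary (Matrix (Fin 2) (Fin 2) ℝ) :=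
    fin_two_rotation_mem_unitary (by linear_combination x ^ 2 * hc2)
  have hM : leapfrogMatrix x = (↑S⁻¹ : Matrix (Fin 2) (Fin 2) ℝ) * Q * S :=
    leapfrogMatrix_eq_diagonal_inv_mul_rotation_mul hc2 hc0.ne'
  rw [hM, Real.rpow_neg hpos.le, ← Real.sqrt_eq_rpow]
  calc _ ≤ ‖(↑S⁻¹ : Matrix (Fin 2) (Fin 2) ℝ)‖ * ‖(S : Matrix (Fin 2) (Fin 2) ℝ)‖ :=
        norm_pow_units_inv_mul_mul_le S hQ m
    _ ≤ c⁻¹ * 1 := mul_le_mul hS_inv hS (norm_nonneg _) (by positivity)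
    _ = c⁻¹ := mul_one _

/-- Let `σ ≥ 0`, `τ ≥ 0` with `τσ < 2`, and let `M` be the one-step leapfrog propagator on a
singular pair with singular value `σ`:
`M = [[1 − τ²σ²/2, τσ(1 − τ²σ²/4)], [−τσ, 1 − τ²σ²/2]]`.
Then `‖M^m‖ ≤ (1 − τ²σ²/4)^(−1/2)` for every natural number `m`, in the spectral norm. -/
theorem leapfrog_two_by_two_pow_bounded (σ τ : ℝ) (hσ : 0 ≤ σ) (hτ : 0 ≤ τ)
    (h2 : τ * σ < 2) (m : ℕ) :
    ‖(!![1 - τ ^ 2 * σ ^ 2 / 2, τ * σ * (1 - τ ^ 2 * σ ^ 2 / 4);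
        -(τ * σ), 1 - τ ^ 2 * σ ^ 2 / 2] : Matrix (Fin 2) (Fin 2) ℝ) ^ m‖ ≤
      (1 - τ ^ 2 * σ ^ 2 / 4) ^ (-(1 / 2) : ℝ) := by
  have hx : (τ * σ) ^ 2 < 4 := by nlinarith [mul_nonneg hτ hσ]
  rw [← mul_pow]
  exact norm_leapfrogMatrix_pow_le hx m
end
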